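/- For every n and every subset A ⊆ Fin n, the operators 𝔏_α^A and 𝔏_β^A satisfy the same algebraic relations as L_α and L_β: (𝔏_α^A)² = 𝔏_β^A·𝔏_α^A = −𝔏_α^A and (𝔏_β^A)² = 𝔏_α^A·𝔏_β^A = −𝔏_β^A. -/

import Mathlib

open Matrix


/-- The Markov generator `L_α = [[-1, 0], [1, 0]]`. -/
noncomputable def Lalpha : Matrix (Fin 2) (Fin 2) ℝ := !![-1, 0; 1, 0]

/-- The Markov generator `L_β = [[0, 1], [0, -1]]`. -/
noncomputable def Lbeta : Matrix (Fin 2) (Fin 2) ℝ := !![0, 1; 0, -1]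

/-- `X^(A)`: the operator on the `n`-fold tensor power `(ℝ²)^⊗n` (indexed by functions
`Fin n → Fin 2`) acting as `X` on the tensor factors in `A` and as the identity elsewhere:
`(X^(A))_{f,g} = (∏_{i ∈ A} X_{f(i),g(i)}) · (∏_{j ∉ A} [f(j) = g(j)])`. -/
noncomputable def opOn {n : ℕ} (X : Matrix (Fin 2) (Fin 2) ℝ) (A : Finset (Fin n)) :
    Matrix (Fin n → Fin 2) (Fin n → Fin 2) ℝ :=
  fun f g => (∏ i ∈ A, X (f i) (g i)) * ∏ j ∈ Aᶜ, (if f j = g j then (1 : ℝ) else 0)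

/-- `𝔏_X^A := ∑_{∅ ≠ B ⊆ A} X^(B)`. -/
noncomputable def frakLA {n : ℕ} (X : Matrix (Fin 2) (Fin 2) ℝ) (A : Finset (Fin n)) :
    Matrix (Fin n → Fin 2) (Fin n → Fin 2) ℝ :=
  ∑ B ∈ A.powerset.filter (fun B => B.Nonempty), opOn X B

/-! `𝔏_X^A = (1 + X)^(A) - 1`, and `X ↦ X^(A)` is multiplicative, being a Kronecker product of
copies of `X` and `1`. Since `P = 1 + L_α` and `Q = 1 + L_β` satisfy `x * y = x` for all
`x, y ∈ {P, Q}`, so do `P^(A)` and `Q^(A)`, and in any ring `x * y = x` gives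
`(x - 1) * (y - 1) = -(y - 1)`. -/

lemma sub_one_mul_sub_one_of_mul_eq_left {R : Type*} [Ring R] {x y : R} (h : x * y = x) :
    (x - 1) * (y - 1) = -(y - 1) := by
  rw [sub_one_mul, mul_sub_one, h]
  abel

namespace Matrix

def piKronecker {ι m R : Type*} [Fintype ι] [CommSemiring R] (M : ι → Matrix m m R) :
    Matrix (ι → m) (ι → m) R :=
  fun f g => ∏ i, M i (f i) (g i)

variable {ι m R : Type*} [Fintype ι] [CommSemiring R]

theorem piKronecker_mul [DecidableEq ι] [Fintype m] (M N : ι → Matrix m m R) :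
    piKronecker M * piKronecker N = piKronecker (M * N) := by
  ext f g
  simp only [piKronecker, mul_apply, Pi.mul_apply, Finset.prod_univ_sum, Fintype.piFinset_univ,
    Finset.prod_mul_distrib]

theorem piKronecker_one [DecidableEq m] : piKronecker (fun _ : ι => (1 : Matrix m m R)) = 1 := by
  ext f g
  by_cases hfg : f = g
  · subst hfg
    simp [piKronecker]
  · obtain ⟨j, hj⟩ := Function.ne_iff.mp hfg
    rw [one_apply_ne hfg]
    exact Finset.prod_eq_zero (Finset.mem_univ j) (one_apply_ne hj)

theorem vecMulVec_one_mul_vecMulVec_one {l n : Type*} [Fintype m] (u : l → R)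
    {v : m → R} (hv : ∑ i, v i = 1) :
    vecMulVec u (1 : m → R) * vecMulVec v (1 : n → R) = vecMulVec u 1 := by
  rw [vecMulVec_mul_vecMulVec, one_dotProduct, hv, one_smul]

end Matrix

section TensorOperators

variable {n : ℕ}

theorem opOn_apply (X : Matrix (Fin 2) (Fin 2) ℝ) (A : Finset (Fin n)) (f g : Fin n → Fin 2) :
    opOn X A f g =
      (∏ i ∈ A, X (f i) (g i)) * ∏ j ∈ Aᶜ, (1 : Matrix (Fin 2) (Fin 2) ℝ) (f j) (g j) := by
  simp only [opOn, one_apply]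

theorem opOn_eq_piKronecker (X : Matrix (Fin 2) (Fin 2) ℝ) (A : Finset (Fin n)) :
    opOn X A = piKronecker fun i => if i ∈ A then X else 1 := by
  ext f g
  rw [opOn_apply, piKronecker, ← Finset.prod_mul_prod_compl A]
  congr 1 <;> refine Finset.prod_congr rfl fun i hi => ?_
  · rw [if_pos hi]
  · rw [if_neg (Finset.mem_compl.mp hi)]

theorem opOn_mul (Y Z : Matrix (Fin 2) (Fin 2) ℝ) (A : Finset (Fin n)) :
    opOn Y A * opOn Z A = opOn (Y * Z) A := by
  simp only [opOn_eq_piKronecker, piKronecker_mul]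
  congr 1
  ext1 i
  by_cases hi : i ∈ A <;> simp [hi]

theorem opOn_empty (X : Matrix (Fin 2) (Fin 2) ℝ) : opOn X (∅ : Finset (Fin n)) = 1 := by
  simp only [opOn_eq_piKronecker, Finset.notMem_empty, if_false, piKronecker_one]

theorem opOn_one_add (X : Matrix (Fin 2) (Fin 2) ℝ) (A : Finset (Fin n)) :
    opOn (1 + X) A = ∑ B ∈ A.powerset, opOn X B := by
  ext f g
  simp only [Matrix.sum_apply, opOn_apply, Matrix.add_apply]
  simp only [add_comm ((1 : Matrix (Fin 2) (Fin 2) ℝ) _ _), Finset.prod_add, Finset.sum_mul]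
  refine Finset.sum_congr rfl fun B hB => ?_
  rw [mul_assoc, ← compl_sdiff_compl,
    Finset.prod_sdiff (Finset.compl_subset_compl.mpr (Finset.mem_powerset.mp hB))]

theorem frakLA_eq_opOn_one_add_sub_one (X : Matrix (Fin 2) (Fin 2) ℝ) (A : Finset (Fin n)) :
    frakLA X A = opOn (1 + X) A - 1 := by
  have hempty : A.powerset.filter (fun B => ¬B.Nonempty) = {∅} := by
    ext B
    simp only [Finset.mem_filter, Finset.mem_powerset, Finset.not_nonempty_iff_eq_empty,
      Finset.mem_singleton]
    exact and_iff_right_of_imp fun hB => hB ▸ Finset.empty_subset A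
  rw [opOn_one_add, ← Finset.sum_filter_add_sum_filter_not _ (fun B => B.Nonempty), hempty,
    Finset.sum_singleton, opOn_empty, frakLA, add_sub_cancel_right]

theorem frakLA_mul_frakLA_of_mul_eq_left {X Y : Matrix (Fin 2) (Fin 2) ℝ}
    (h : (1 + X) * (1 + Y) = 1 + X) (A : Finset (Fin n)) :
    frakLA X A * frakLA Y A = -frakLA Y A := by
  simp only [frakLA_eq_opOn_one_add_sub_one]
  exact sub_one_mul_sub_one_of_mul_eq_left (by rw [opOn_mul, h])

end TensorOperators

/- `1 + L_α` and `1 + L_β` are the rank-one stochastic matrices resetting every state to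
state `1`, resp. `0`; any two such matrices `P`, `Q` satisfy `P * Q = P`. -/
theorem one_add_Lalpha : 1 + Lalpha = vecMulVec ![0, 1] 1 := by
  ext i j
  fin_cases i <;> fin_cases j <;> simp [Lalpha, vecMulVec_apply]

theorem one_add_Lbeta : 1 + Lbeta = vecMulVec ![1, 0] 1 := by
  ext i j
  fin_cases i <;> fin_cases j <;> simp [Lbeta, vecMulVec_apply]

theorem frakLA_mul_frakLA {n : ℕ} {X Y : Matrix (Fin 2) (Fin 2) ℝ}
    (hX : X = Lalpha ∨ X = Lbeta) (hY : Y = Lalpha ∨ Y = Lbeta) (A : Finset (Fin n)) :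
    frakLA X A * frakLA Y A = -frakLA Y A := by
  refine frakLA_mul_frakLA_of_mul_eq_left ?_ A
  rcases hX with rfl | rfl <;> rcases hY with rfl | rfl <;>
    simp only [one_add_Lalpha, one_add_Lbeta] <;>
    exact vecMulVec_one_mul_vecMulVec_one _ (by simp)

/-- For every `n` and every `A ⊆ Fin n`, the operators `𝔏_α^A`, `𝔏_β^A` satisfy the same
relations as `L_α`, `L_β`: `(𝔏_α^A)² = 𝔏_β^A·𝔏_α^A = −𝔏_α^A` and
`(𝔏_β^A)² = 𝔏_α^A·𝔏_β^A = −𝔏_β^A`. -/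
theorem frakLA_relations (n : ℕ) (A : Finset (Fin n)) :
    (frakLA Lalpha A) ^ 2 = frakLA Lbeta A * frakLA Lalpha A ∧
    frakLA Lbeta A * frakLA Lalpha A = -frakLA Lalpha A ∧
    (frakLA Lbeta A) ^ 2 = frakLA Lalpha A * frakLA Lbeta A ∧
    frakLA Lalpha A * frakLA Lbeta A = -frakLA Lbeta A := by
  have hα : Lalpha = Lalpha ∨ Lalpha = Lbeta := .inl rfl
  have hβ : Lbeta = Lalpha ∨ Lbeta = Lbeta := .inr rfl
  simp only [sq, frakLA_mul_frakLA hα hα, frakLA_mul_frakLA hβ hα, frakLA_mul_frakLA hβ hβ,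
    frakLA_mul_frakLA hα hβ, and_self]
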